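/- Let k ≥ 1 and n ≥ max(k, 3) be integers and let z ∈ {1,…,k}^n. Then ( ∏_{a=1}^{k} ( n_a(z)/n )^{n_a(z)} ) · Γ(1/2)^k · Γ( n + k/2 ) / ( Γ(k/2) · ∏_{a=1}^{k} Γ( n_a(z) + 1/2 ) ) ≤ n^k. -/

import Mathlib

open Finset Real Nat

/-- `n_a(z)`: number of vertices in community `a`. -/
def nCount {n k : ℕ} (z : Fin n → Fin k) (a : Fin k) : ℕ :=
  (Finset.univ.filter fun i => z i = a).card

/-!
The bound splits into two estimates. For the classes: `Γ(1/2) m^m ≤ e^m Γ(m + 1/2)`, from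
Stirling's lower bound for `m!` together with the log-convexity of `Γ`, which gives
`m!² ≤ Γ(m + 1/2) Γ(m + 3/2)`; multiplied over the classes (whose sizes sum to `n`) this bounds
`Γ(1/2)^k ∏ (n_a/n)^{n_a}` by `(e/n)^n ∏ Γ(n_a + 1/2)`. For the whole population:
`e^n Γ(n + k/2) ≤ n^{n+k} Γ(k/2)` for `n ≥ 3`, by induction on `n` using
`(1 + 1/n)^{n+1} ≥ e`, starting from `n = 3`, where it follows by the step `k ↦ k + 2`
from `k = 1, 2`.
-/

lemma factorial_sq_le_Gamma_add_half_sq (m : ℕ) :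
    (m ! : ℝ) ^ 2 ≤ (m + 1 / 2) * Gamma (m + 1 / 2) ^ 2 := by
  have hs : (0 : ℝ) < m + 1 / 2 := by positivity
  have h := Gamma_mul_add_mul_le_rpow_Gamma_mul_rpow_Gamma hs
    (by positivity : (0 : ℝ) < m + 1 / 2 + 1) (by norm_num : (0 : ℝ) < 1 / 2)
    (by norm_num : (0 : ℝ) < 1 / 2) (by norm_num)
  rw [Gamma_add_one hs.ne', ← mul_rpow (by positivity) (by positivity), ← sqrt_eq_rpow,
    le_sqrt (Gamma_pos_of_pos (by positivity)).le (by positivity),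
    show 1 / 2 * ((m : ℝ) + 1 / 2) + 1 / 2 * (m + 1 / 2 + 1) = m + 1 by ring,
    Gamma_nat_eq_factorial] at h
  linarith

lemma Gamma_one_half_mul_pow_le (m : ℕ) :
    Gamma (1 / 2) * m ^ m ≤ exp 1 ^ m * Gamma (m + 1 / 2) := by
  rcases m.eq_zero_or_pos with rfl | hm
  · simp
  have hm1 : (1 : ℝ) ≤ m := by exact_mod_cast hm
  have hstirling := pow_le_pow_left₀ (by positivity) (Stirling.le_factorial_stirling m) 2
  rw [mul_pow, sq_sqrt (by positivity), div_pow, div_pow, mul_div_assoc',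
    div_le_iff₀ (by positivity)] at hstirling
  rw [← pow_le_pow_iff_left₀ (by positivity) (by positivity) two_ne_zero, mul_pow, mul_pow,
    Gamma_one_half_eq, sq_sqrt pi_pos.le]
  have hGamma := mul_le_mul_of_nonneg_right (factorial_sq_le_Gamma_add_half_sq m)
    (by positivity : (0 : ℝ) ≤ (exp 1 ^ m) ^ 2)
  have hslack : 0 ≤ (m - 1 / 2) * ((exp 1 ^ m) ^ 2 * Gamma (m + 1 / 2) ^ 2) := by
    have : (0 : ℝ) ≤ m - 1 / 2 := by linarith
    positivity
  nlinarith

lemma Gamma_one_half_pow_mul_prod_pow_le {ι : Type*} [Fintype ι] (m : ι → ℕ) :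
    Gamma (1 / 2) ^ Fintype.card ι * ∏ a, (m a : ℝ) ^ m a ≤
      exp 1 ^ (∑ a, m a) * ∏ a, Gamma (m a + 1 / 2) := by
  calc Gamma (1 / 2) ^ Fintype.card ι * ∏ a, (m a : ℝ) ^ m a
      = ∏ a, Gamma (1 / 2) * (m a : ℝ) ^ m a := by
        rw [prod_mul_distrib, prod_const, Finset.card_univ]
    _ ≤ ∏ a, exp 1 ^ m a * Gamma (m a + 1 / 2) :=
        prod_le_prod (fun a _ => by positivity) fun a _ => Gamma_one_half_mul_pow_le _
    _ = exp 1 ^ (∑ a, m a) * ∏ a, Gamma (m a + 1 / 2) := by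
        rw [prod_mul_distrib, prod_pow_eq_pow_sum]

lemma exp_one_mul_pow_le_add_one_pow (n : ℕ) :
    exp 1 * (n : ℝ) ^ (n + 1) ≤ (n + 1) ^ (n + 1) := by
  have h := one_sub_div_pow_le_exp_neg (n := n + 1) (t := 1) (by simp)
  rw [exp_neg, show 1 - 1 / ((n + 1 : ℕ) : ℝ) = n / (n + 1) by push_cast; field_simp; ring,
    div_pow, div_le_iff₀ (by positivity)] at h
  calc exp 1 * (n : ℝ) ^ (n + 1) ≤ exp 1 * ((exp 1)⁻¹ * (n + 1) ^ (n + 1)) := by gcongr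
    _ = (n + 1) ^ (n + 1) := by field_simp

lemma pow_mul_add_le_add_one_pow {x : ℝ} (hx : 0 ≤ x) (j : ℕ) :
    x ^ j * (x + (j + 1)) ≤ (x + 1) ^ (j + 1) := by
  induction j with
  | zero => simp
  | succ j ih =>
    calc x ^ (j + 1) * (x + ((j + 1 : ℕ) + 1))
        = x * (x ^ j * (x + (j + 1))) + x ^ (j + 1) := by push_cast; ring
      _ ≤ x * (x + 1) ^ (j + 1) + (x + 1) ^ (j + 1) := by
        gcongr
        linarith
      _ = (x + 1) ^ (j + 1 + 1) := by ring

lemma exp_pow_mul_Gamma_le_succ {n k : ℕ} (hk : 1 ≤ k)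
    (h : exp 1 ^ n * Gamma (n + k / 2) ≤ n ^ (n + k) * Gamma (k / 2)) :
    exp 1 ^ (n + 1) * Gamma ((n + 1 : ℕ) + k / 2) ≤
      ((n + 1 : ℕ) : ℝ) ^ (n + 1 + k) * Gamma (k / 2) := by
  obtain ⟨j, rfl⟩ : ∃ j, k = j + 1 := ⟨k - 1, by omega⟩
  set c : ℝ := ((j + 1 : ℕ) : ℝ) / 2
  have hc : 0 < n + c := by positivity
  have hbernoulli : (n : ℝ) ^ j * (n + c) ≤ (n + 1) ^ (j + 1) := by
    refine le_trans ?_ (pow_mul_add_le_add_one_pow n.cast_nonneg j)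
    gcongr
    push_cast [c]
    linarith
  rw [show ((n + 1 : ℕ) : ℝ) + c = n + c + 1 by push_cast; ring, Gamma_add_one hc.ne']
  calc exp 1 ^ (n + 1) * ((n + c) * Gamma (n + c))
      = exp 1 * (n + c) * (exp 1 ^ n * Gamma (n + c)) := by ring
    _ ≤ exp 1 * (n + c) * (n ^ (n + (j + 1)) * Gamma c) := by gcongr
    _ = exp 1 * n ^ (n + 1) * (n ^ j * (n + c)) * Gamma c := by ring
    _ ≤ (n + 1) ^ (n + 1) * (n + 1) ^ (j + 1) * Gamma c := by
      gcongr
      exact exp_one_mul_pow_le_add_one_pow n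
    _ = ((n + 1 : ℕ) : ℝ) ^ (n + 1 + (j + 1)) * Gamma c := by push_cast; ring

lemma exp_pow_mul_Gamma_le_add_two {n k : ℕ} (hn : 3 ≤ n) (hk : 1 ≤ k)
    (h : exp 1 ^ n * Gamma (n + k / 2) ≤ n ^ (n + k) * Gamma (k / 2)) :
    exp 1 ^ n * Gamma (n + (k + 2 : ℕ) / 2) ≤
      n ^ (n + (k + 2)) * Gamma ((k + 2 : ℕ) / 2) := by
  have hc : (1 : ℝ) / 2 ≤ k / 2 := by gcongr; exact_mod_cast hk
  have hn3 : (3 : ℝ) ≤ n := by exact_mod_cast hn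
  have hshift : ((k + 2 : ℕ) : ℝ) / 2 = k / 2 + 1 := by push_cast; ring
  rw [hshift, ← add_assoc, Gamma_add_one (by positivity), Gamma_add_one (by positivity)]
  have hquad : (n : ℝ) + k / 2 ≤ n ^ 2 * (k / 2) := by
    nlinarith [mul_nonneg (sub_nonneg.2 hc) (by nlinarith : (0 : ℝ) ≤ n ^ 2 - 1)]
  calc exp 1 ^ n * ((n + k / 2) * Gamma (n + k / 2))
      = (n + k / 2) * (exp 1 ^ n * Gamma (n + k / 2)) := by ring
    _ ≤ (n ^ 2 * (k / 2)) * (n ^ (n + k) * Gamma (k / 2)) := by gcongr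
    _ = n ^ (n + (k + 2)) * (k / 2 * Gamma (k / 2)) := by ring

lemma exp_pow_mul_Gamma_le_three (k : ℕ) (hk : 1 ≤ k) :
    exp 1 ^ 3 * Gamma (3 + k / 2) ≤ 3 ^ (3 + k) * Gamma (k / 2) := by
  have he : exp 1 ^ 3 ≤ 27 := by
    calc exp 1 ^ 3 ≤ 3 ^ 3 := pow_le_pow_left₀ (exp_pos 1).le exp_one_lt_three.le 3
      _ = 27 := by norm_num
  induction k using Nat.strong_induction_on with
  | _ k ih =>
    match k, hk with
    | 1, _ =>
      have hG := Gamma_pos_of_pos (by norm_num : (0 : ℝ) < 1 / 2)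
      rw [show (3 : ℝ) + ((1 : ℕ) : ℝ) / 2 = 1 / 2 + 1 + 1 + 1 by norm_num,
        Gamma_add_one (by norm_num), Gamma_add_one (by norm_num), Gamma_add_one (by norm_num)]
      simp only [Nat.cast_one]
      nlinarith [mul_le_mul_of_nonneg_right he hG.le]
    | 2, _ =>
      rw [show (3 : ℝ) + ((2 : ℕ) : ℝ) / 2 = (3 : ℕ) + 1 by norm_num,
        Gamma_nat_eq_factorial]
      norm_num only [factorial, Nat.cast_ofNat, div_self, Gamma_one]
      linarith
    | k + 3, _ =>
      have := exp_pow_mul_Gamma_le_add_two le_rfl (by omega) (ih (k + 1) (by omega) (by omega))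
      push_cast at this ⊢
      convert this using 3 <;> ring

lemma exp_pow_mul_Gamma_le {n k : ℕ} (hn : 3 ≤ n) (hk : 1 ≤ k) :
    exp 1 ^ n * Gamma (n + k / 2) ≤ n ^ (n + k) * Gamma (k / 2) := by
  induction n, hn using Nat.le_induction with
  | base => exact_mod_cast exp_pow_mul_Gamma_le_three k hk
  | succ n _ ih => exact exp_pow_mul_Gamma_le_succ hk ih

lemma sum_nCount {n k : ℕ} (z : Fin n → Fin k) : ∑ a, nCount z a = n := by
  simpa [nCount] using
    (card_eq_sum_card_fiberwise (s := univ) (t := univ) (f := z) (by simp)).symm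

/-- bound on the ratio `Ĉ(z)/C(z)`. -/
theorem ratio_C_bound (k n : ℕ) (hk : 1 ≤ k) (hn : max k 3 ≤ n)
    (z : Fin n → Fin k) :
    (∏ a : Fin k, ((nCount z a : ℝ) / (n : ℝ)) ^ (nCount z a)) *
        Real.Gamma (1 / 2) ^ k * Real.Gamma ((n : ℝ) + (k : ℝ) / 2) /
        (Real.Gamma ((k : ℝ) / 2) *
          ∏ a : Fin k, Real.Gamma ((nCount z a : ℝ) + 1 / 2)) ≤
      (n : ℝ) ^ k := by
  have hclasses := Gamma_one_half_pow_mul_prod_pow_le (nCount z)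
  rw [Fintype.card_fin, sum_nCount] at hclasses
  have hn3 : 3 ≤ n := le_of_max_le_right hn
  have hpopulation := exp_pow_mul_Gamma_le hn3 hk
  simp only [div_pow]
  rw [prod_div_distrib, prod_pow_eq_pow_sum, sum_nCount, div_le_iff₀ (by positivity)]
  set P := ∏ a, (nCount z a : ℝ) ^ nCount z a
  set G := ∏ a, Gamma (nCount z a + 1 / 2)
  calc P / n ^ n * Gamma (1 / 2) ^ k * Gamma (n + k / 2)
      = (Gamma (1 / 2) ^ k * P) * Gamma (n + k / 2) / n ^ n := by ring
    _ ≤ (exp 1 ^ n * G) * Gamma (n + k / 2) / n ^ n := by gcongr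
    _ = G * (exp 1 ^ n * Gamma (n + k / 2)) / n ^ n := by ring
    _ ≤ G * (n ^ (n + k) * Gamma (k / 2)) / n ^ n := by gcongr
    _ = n ^ k * (Gamma (k / 2) * G) := by
        rw [eq_comm, eq_div_iff (by positivity)]
        ring
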